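/- arXiv:0811.2137 — 7 statements merged into one kernel-verified Lean document; each statement's English description precedes it below -/
import Mathlib

section
/- Let (a,b,c) ∈ ℝ³ with a²+b²+c² ≠ 0 and let 𝔥(2,1)_{a,b,c} be the Lie algebra with orthonormal basis E₁,…,E₅ and torsion 3-form T = η∧dη = a(e¹∧e²∧e⁵ − e³∧e⁴∧e⁵) + b(e¹∧e³∧e⁵ + e²∧e⁴∧e⁵) + c(e¹∧e⁴∧e⁵ − e²∧e³∧e⁵). Then the torsion connection ∇⁺ parallelizes T: for all X,Y,Z,W ∈ 𝔥(2,1)_{a,b,c}, T(∇⁺_X Y, Z, W) + T(Y, ∇⁺_X Z, W) + T(Y, Z, ∇⁺_X W) = 0 (i.e. ∇⁺T = 0 for the associated left-invariant structure). -/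
noncomputable section
open Real

/-- ℝ⁵, the underlying space of the Lie algebra 𝔥(2,1)_{a,b,c}. -/
abbrev V : Type := Fin 5 → ℝ

/-- The standard (orthonormal) basis vectors E₁,…,E₅ (0-indexed). -/
def E (i : Fin 5) : V := Pi.single i 1

/-- The inner product making E₁,…,E₅ orthonormal. -/
def ip (x y : V) : ℝ := ∑ i, x i * y i

/-- The dual basis 1-forms e¹,…,e⁵ (0-indexed). -/
def e (i : Fin 5) : V → ℝ := fun x => x i

/-- The Lie bracket of 𝔥(2,1)_{a,b,c}: the only nonzero brackets of basis vectors are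
[E₁,E₂] = −aE₅, [E₃,E₄] = aE₅, [E₁,E₃] = −bE₅, [E₂,E₄] = −bE₅, [E₁,E₄] = −cE₅,
[E₂,E₃] = cE₅. -/
def br (a b c : ℝ) (x y : V) : V := fun k =>
  if k = 4 then
    -a * (x 0 * y 1 - x 1 * y 0) + a * (x 2 * y 3 - x 3 * y 2)
      - b * (x 0 * y 2 - x 2 * y 0) - b * (x 1 * y 3 - x 3 * y 1)
      - c * (x 0 * y 3 - x 3 * y 0) + c * (x 1 * y 2 - x 2 * y 1)
  else 0

/-- Chevalley–Eilenberg differential of a 1-form: dα(X,Y) = −α([X,Y]). -/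
def d1 (a b c : ℝ) (α : V → ℝ) : V → V → ℝ := fun x y => -α (br a b c x y)

/-- dη = de⁵, the Chevalley–Eilenberg differential of η = e⁵. -/
def dEta (a b c : ℝ) : V → V → ℝ := d1 a b c (e 4)

/-- Wedge product of two 1-forms. -/
def w11 (α β : V → ℝ) : V → V → ℝ := fun x y => α x * β y - α y * β x

/-- Wedge product of a 1-form and a 2-form. -/
def w12 (α : V → ℝ) (β : V → V → ℝ) : V → V → V → ℝ :=
  fun x y z => α x * β y z - α y * β x z + α z * β x y

/-- Wedge product of two 2-forms. -/
def w22 (α β : V → V → ℝ) : V → V → V → V → ℝ := fun x y z w =>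
  α x y * β z w - α x z * β y w + α x w * β y z
    + α y z * β x w - α y w * β x z + α z w * β x y

/-- The 4-form e¹∧e²∧e³∧e⁴. -/
def e1234 : V → V → V → V → ℝ := w22 (w11 (e 0) (e 1)) (w11 (e 2) (e 3))

/-- The torsion 3-form T = η∧dη. -/
def T3 (a b c : ℝ) : V → V → V → ℝ := w12 (e 4) (dEta a b c)

/-- Chevalley–Eilenberg differential of a 3-form. -/
def d3 (a b c : ℝ) (T : V → V → V → ℝ) : V → V → V → V → ℝ := fun x y z w =>
  -T (br a b c x y) z w + T (br a b c x z) y w - T (br a b c x w) y z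
    - T (br a b c y z) x w + T (br a b c y w) x z - T (br a b c z w) x y

/-- The Levi-Civita (Koszul) connection of the left-invariant metric:
2⟨∇_X Y, Z⟩ = ⟨[X,Y],Z⟩ − ⟨[Y,Z],X⟩ + ⟨[Z,X],Y⟩. -/
def nablaG (a b c : ℝ) (x y : V) : V := fun k =>
  (1 / 2) * (ip (br a b c x y) (E k) - ip (br a b c y (E k)) x + ip (br a b c (E k) x) y)

/-- The torsion connection ∇⁺: ⟨∇⁺_X Y, Z⟩ = ⟨∇_X Y, Z⟩ + ½T(X,Y,Z). -/
def nablaP (a b c : ℝ) (x y : V) : V := fun k =>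
  nablaG a b c x y k + (1 / 2) * T3 a b c x y (E k)

/-- Connection 1-forms ωⁱⱼ(X) = ⟨D_X E_j, E_i⟩ of a connection D. -/
def conn1 (D : V → V → V) (i j : Fin 5) : V → ℝ := fun x => ip (D x (E j)) (E i)

/-- Curvature 2-forms Ωⁱⱼ = dσⁱⱼ + Σ_k σⁱ_k ∧ σᵏⱼ of connection 1-forms σ. -/
def curv (a b c : ℝ) (σ : Fin 5 → Fin 5 → V → ℝ) (i j : Fin 5) : V → V → ℝ :=
  fun x y => d1 a b c (σ i j) x y + ∑ k, (σ i k x * σ k j y - σ i k y * σ k j x)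

/-- First Pontrjagin 4-form p₁ = (1/8π²) Σ_{1≤i<j≤5} Ωⁱⱼ∧Ωⁱⱼ. -/
def pont (Ω : Fin 5 → Fin 5 → V → V → ℝ) : V → V → V → V → ℝ := fun x y z w =>
  (1 / (8 * π ^ 2)) * ∑ i, ∑ j, if i < j then w22 (Ω i j) (Ω i j) x y z w else 0

/-- The endomorphism ψ: ψE₁ = −E₂, ψE₂ = E₁, ψE₃ = −E₄, ψE₄ = E₃, ψE₅ = 0. -/
def psi (x : V) : V := ![x 1, -x 0, x 3, -x 2, 0]

/-- The coefficients of the connection 1-forms σⁱⱼ = (S i j)·e⁵ of the instanton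
A_{λ,μ,τ}: σ¹₂ = −σ²₁ = −σ³₄ = σ⁴₃ = −λe⁵, σ¹₃ = −σ³₁ = σ²₄ = −σ⁴₂ = −μe⁵,
σ¹₄ = −σ⁴₁ = −σ²₃ = σ³₂ = −τe⁵, all other σⁱⱼ = 0. -/
def S (lam mu tau : ℝ) : Fin 5 → Fin 5 → ℝ :=
  ![![0, -lam, -mu, -tau, 0],
    ![lam, 0, tau, -mu, 0],
    ![mu, -tau, 0, lam, 0],
    ![tau, mu, -lam, 0, 0],
    ![0, 0, 0, 0, 0]]

/-- The connection 1-forms of the instanton A_{λ,μ,τ}. -/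
def sigmaA (lam mu tau : ℝ) (i j : Fin 5) : V → ℝ := fun x => S lam mu tau i j * e 4 x

/-!
On 𝔥(2,1)_{a,b,c} one has dη(Y, Z) = ⟨φY, Z⟩ for a skew-symmetric endomorphism φ with η ∘ φ = 0,
and the Koszul formula gives ∇⁺_X = η(X) φ. A skew endomorphism commuting with φ preserves the
2-form ⟨φ·, ·⟩, so η(X) φ annihilates both η and dη, and hence acts as zero on T = η ∧ dη.
-/

open Matrix

theorem dotProduct_mulVec_derivation_eq_zero {n R : Type*} [Fintype n] [CommRing R]
    (J A : Matrix n n R) (hA : Aᵀ = -A) (hAJ : Commute A J) (y z : n → R) :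
    (J *ᵥ (A *ᵥ y)) ⬝ᵥ z + (J *ᵥ y) ⬝ᵥ (A *ᵥ z) = 0 := by
  rw [dotProduct_mulVec, ← mulVec_transpose, hA, neg_mulVec, mulVec_mulVec, mulVec_mulVec, hAJ.eq,
    neg_dotProduct, add_neg_cancel]

theorem w12_derivation_eq_zero (α : V → ℝ) (β : V → V → ℝ) (φ : V → V)
    (hα : ∀ x, α (φ x) = 0) (hβ : ∀ x y, β (φ x) y + β x (φ y) = 0) (x y z : V) :
    w12 α β (φ x) y z + w12 α β x (φ y) z + w12 α β x y (φ z) = 0 := by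
  simp only [w12, hα]
  linear_combination α x * hβ y z - α y * hβ x z + α z * hβ x y

def dEtaMatrix (a b c : ℝ) : Matrix (Fin 5) (Fin 5) ℝ :=
  !![0, -a, -b, -c, 0;
     a, 0, c, -b, 0;
     b, -c, 0, a, 0;
     c, b, -a, 0, 0;
     0, 0, 0, 0, 0]

theorem dEtaMatrix_transpose (a b c : ℝ) : (dEtaMatrix a b c)ᵀ = -dEtaMatrix a b c := by
  ext i j
  fin_cases i <;> fin_cases j <;> simp [dEtaMatrix]

theorem mulVec_dEtaMatrix_four (a b c : ℝ) (y : V) : (dEtaMatrix a b c *ᵥ y) 4 = 0 := by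
  simp [dEtaMatrix, mulVec, dotProduct, Fin.sum_univ_five]

theorem dEta_eq_dotProduct (a b c : ℝ) (y z : V) :
    dEta a b c y z = (dEtaMatrix a b c *ᵥ y) ⬝ᵥ z := by
  simp [dEta, d1, e, br, dEtaMatrix, mulVec, dotProduct, Fin.sum_univ_five]
  ring

theorem nablaP_eq_mulVec (a b c : ℝ) (x y : V) :
    nablaP a b c x y = (x 4 • dEtaMatrix a b c) *ᵥ y := by
  ext k
  fin_cases k <;>
    simp [nablaP, nablaG, T3, w12, dEta, d1, e, br, ip, E, Pi.single_apply, dEtaMatrix, mulVec,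
      dotProduct, Fin.sum_univ_five] <;>
    ring

theorem torsion_parallel_general (a b c : ℝ) :
    ∀ X Y Z W : V,
      T3 a b c (nablaP a b c X Y) Z W + T3 a b c Y (nablaP a b c X Z) W
        + T3 a b c Y Z (nablaP a b c X W) = 0 := by
  intro X Y Z W
  set J := dEtaMatrix a b c
  have hskew : (X 4 • J)ᵀ = -(X 4 • J) := by
    rw [transpose_smul, dEtaMatrix_transpose, smul_neg]
  have hcomm : Commute (X 4 • J) J := (Commute.refl J).smul_left (X 4)
  simp only [nablaP_eq_mulVec]
  refine w12_derivation_eq_zero (e 4) (dEta a b c) _ (fun y => ?_) (fun y z => ?_) Y Z W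
  · simp [e, smul_mulVec, mulVec_dEtaMatrix_four]
  · simp only [dEta_eq_dotProduct]
    exact dotProduct_mulVec_derivation_eq_zero J _ hskew hcomm y z

/-- On 𝔥(2,1)_{a,b,c} with a²+b²+c² ≠ 0, the torsion connection ∇⁺
parallelizes the torsion 3-form T = η∧dη: for all X,Y,Z,W,
T(∇⁺_X Y, Z, W) + T(Y, ∇⁺_X Z, W) + T(Y, Z, ∇⁺_X W) = 0, i.e. ∇⁺T = 0. -/
theorem torsion_parallel (a b c : ℝ) (h : a ^ 2 + b ^ 2 + c ^ 2 ≠ 0) :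
    ∀ X Y Z W : V,
      T3 a b c (nablaP a b c X Y) Z W + T3 a b c Y (nablaP a b c X Z) W
        + T3 a b c Y Z (nablaP a b c X W) = 0 :=
  torsion_parallel_general a b c
end
end

section
/- Let (a,b,c) ∈ ℝ³ with a²+b²+c² ≠ 0 and λ,μ,τ ∈ ℝ. On 𝔥(2,1)_{a,b,c}, the connection A_{λ,μ,τ} with connection forms σ¹₂ = −σ²₁ = −σ³₄ = σ⁴₃ = −λe⁵, σ¹₃ = −σ³₁ = σ²₄ = −σ⁴₂ = −μe⁵, σ¹₄ = −σ⁴₁ = −σ²₃ = σ³₂ = −τe⁵ and all other σⁱⱼ = 0 has curvature 2-forms Ω¹₂ = −Ω²₁ = −Ω³₄ = Ω⁴₃ = −λ·de⁵, Ω¹₃ = −Ω³₁ = Ω²₄ = −Ω⁴₂ = −μ·de⁵, Ω¹₄ = −Ω⁴₁ = −Ω²₃ = Ω³₂ = −τ·de⁵, all other Ωⁱⱼ = 0, and these curvature forms satisfy the SU(2)-instanton conditions: Ωⁱⱼ(ψX,ψY) = Ωⁱⱼ(X,Y) for all X,Y and Σ_{k=1}^{5} Ωⁱⱼ(E_k,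 ψE_k) = 0, for all i,j. -/
noncomputable section
open Real

/-!
The connection forms are all multiples of the single 1-form e⁵, so the quadratic term
σ ∧ σ of the curvature vanishes (e⁵ ∧ e⁵ = 0) and Ω = S · de⁵. The instanton conditions
then only concern de⁵, which is a combination of e¹² − e³⁴, e¹³ + e²⁴ and e¹⁴ − e²³:
each of these is ψ-invariant and pairs to zero with ψ.
-/

theorem d1_const_mul (a b c r : ℝ) (α : V → ℝ) (x y : V) :
    d1 a b c (fun z => r * α z) x y = r * d1 a b c α x y := by
  simp only [d1, mul_neg]

theorem curv_const_mul (a b c : ℝ) (A : Fin 5 → Fin 5 → ℝ) (α : V → ℝ) (i j : Fin 5)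
    (x y : V) :
    curv a b c (fun i j z => A i j * α z) i j x y = A i j * d1 a b c α x y := by
  have wedge_self : ∀ k, A i k * α x * (A k j * α y) - A i k * α y * (A k j * α x) = 0 :=
    fun k => by ring
  simp only [curv, d1_const_mul, wedge_self, Finset.sum_const_zero, add_zero]

theorem curv_sigmaA {a b c lam mu tau : ℝ} (i j : Fin 5) (x y : V) :
    curv a b c (sigmaA lam mu tau) i j x y = S lam mu tau i j * dEta a b c x y :=
  curv_const_mul a b c (S lam mu tau) (e 4) i j x y

theorem dEta_psi_psi (a b c : ℝ) (x y : V) : dEta a b c (psi x) (psi y) = dEta a b c x y := by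
  simp only [dEta, d1, br, e, psi, if_pos, Matrix.cons_val]
  ring

theorem sum_dEta_E_psi_E (a b c : ℝ) : ∑ k, dEta a b c (E k) (psi (E k)) = 0 := by
  simp [Fin.sum_univ_five, dEta, d1, br, e, psi, E]

theorem instanton_curvature_general (a b c lam mu tau : ℝ) :
    -- the curvature 2-forms
    (∀ i j : Fin 5, ∀ x y : V,
      curv a b c (sigmaA lam mu tau) i j x y = S lam mu tau i j * dEta a b c x y)
    -- SU(2)-instanton condition: Ωⁱⱼ(ψX,ψY) = Ωⁱⱼ(X,Y)
    ∧ (∀ i j : Fin 5, ∀ x y : V,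
        curv a b c (sigmaA lam mu tau) i j (psi x) (psi y)
          = curv a b c (sigmaA lam mu tau) i j x y)
    -- SU(2)-instanton condition: Σ_k Ωⁱⱼ(E_k, ψE_k) = 0
    ∧ (∀ i j : Fin 5,
        (∑ k, curv a b c (sigmaA lam mu tau) i j (E k) (psi (E k))) = 0) := by
  refine ⟨curv_sigmaA, fun i j x y => ?_, fun i j => ?_⟩
  · rw [curv_sigmaA, curv_sigmaA, dEta_psi_psi]
  · simp only [curv_sigmaA, ← Finset.mul_sum, sum_dEta_E_psi_E, mul_zero]

/-- the curvature 2-forms of the connection A_{λ,μ,τ} on 𝔥(2,1)_{a,b,c}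
are Ωⁱⱼ = (S i j)·de⁵ — that is, Ω¹₂ = −Ω²₁ = −Ω³₄ = Ω⁴₃ = −λ·de⁵,
Ω¹₃ = −Ω³₁ = Ω²₄ = −Ω⁴₂ = −μ·de⁵, Ω¹₄ = −Ω⁴₁ = −Ω²₃ = Ω³₂ = −τ·de⁵, all other
Ωⁱⱼ = 0 — and they satisfy the SU(2)-instanton conditions. -/
theorem instanton_curvature (a b c lam mu tau : ℝ) (h : a ^ 2 + b ^ 2 + c ^ 2 ≠ 0) :
    -- the curvature 2-forms
    (∀ i j : Fin 5, ∀ x y : V,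
      curv a b c (sigmaA lam mu tau) i j x y = S lam mu tau i j * dEta a b c x y)
    -- SU(2)-instanton condition: Ωⁱⱼ(ψX,ψY) = Ωⁱⱼ(X,Y)
    ∧ (∀ i j : Fin 5, ∀ x y : V,
        curv a b c (sigmaA lam mu tau) i j (psi x) (psi y)
          = curv a b c (sigmaA lam mu tau) i j x y)
    -- SU(2)-instanton condition: Σ_k Ωⁱⱼ(E_k, ψE_k) = 0
    ∧ (∀ i j : Fin 5,
        (∑ k, curv a b c (sigmaA lam mu tau) i j (E k) (psi (E k))) = 0) :=
  instanton_curvature_general a b c lam mu tau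
end
end

section
/- Let (a,b,c) ∈ ℝ³ with a²+b²+c² ≠ 0. On 𝔥(2,1)_{a,b,c} with the orthonormal metric and torsion 3-form T = η∧dη, the curvature 2-forms of the torsion connection ∇⁺ are Ω¹₂ = −Ω³₄ = −a·de⁵, Ω¹₃ = Ω²₄ = −b·de⁵, Ω¹₄ = −Ω²₃ = −c·de⁵ (with Ωⱼᵢ = −Ωⁱⱼ), and all curvature forms Ωⁱ₅ vanish. -/
noncomputable section
open Real

/-!
In Koszul's formula the bracket only produces `E₅`-components, and adding `½ η∧dη` cancels
everything except `⟨∇⁺_X Y, E_k⟩ = −η(X) dη(E_k, Y)`. Hence the connection forms of `∇⁺` are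
`ωⁱⱼ = Sᵢⱼ e⁵`, those of the instanton `A_{a,b,c}`. All of them are multiples of the single
1-form `e⁵`, so `ω ∧ ω = 0` and `Ω = dω = S de⁵`; the claims are then read off the entries of
the antisymmetric matrix `S`, whose last column vanishes.
-/

namespace Heisenberg

variable (a b c : ℝ)

lemma dEta_swap (x y : V) : dEta a b c y x = -dEta a b c x y := by
  simp only [dEta, d1, br, e, ↓reduceIte]
  ring

lemma ip_br (x y z : V) : ip (br a b c x y) z = -dEta a b c x y * z 4 := by
  simp [ip, br, dEta, d1, e]

lemma ip_E (x : V) (i : Fin 5) : ip x (E i) = x i := by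
  simp [ip, E, Pi.single_apply]

lemma nablaP_apply (x y : V) (k : Fin 5) :
    nablaP a b c x y k = -(x 4 * dEta a b c (E k) y) := by
  simp only [nablaP, nablaG, T3, w12, ip_br, e]
  rw [dEta_swap a b c y (E k), dEta_swap a b c x (E k)]
  ring

lemma dEta_E_E (i j : Fin 5) : dEta a b c (E i) (E j) = -S a b c i j := by
  fin_cases i <;> fin_cases j <;> simp [dEta, d1, br, e, E, S]

lemma S_swap (i j : Fin 5) : S a b c j i = -S a b c i j := by
  have h := dEta_swap a b c (E i) (E j)
  rw [dEta_E_E, dEta_E_E] at h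
  linarith

lemma S_apply_four (i : Fin 5) : S a b c i 4 = 0 := by
  fin_cases i <;> rfl

lemma conn1_nablaP : conn1 (nablaP a b c) = sigmaA a b c := by
  ext i j x
  simp only [conn1, sigmaA, ip_E, nablaP_apply, dEta_E_E, e]
  ring

lemma curv_smul_oneForm (M : Fin 5 → Fin 5 → ℝ) (θ : V → ℝ) (i j : Fin 5) (x y : V) :
    curv a b c (fun i j x => M i j * θ x) i j x y = M i j * d1 a b c θ x y := by
  simp only [curv, d1]
  rw [Finset.sum_eq_zero fun k _ => by ring]
  ring

lemma curv_nablaP (i j : Fin 5) (x y : V) :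
    curv a b c (conn1 (nablaP a b c)) i j x y = S a b c i j * dEta a b c x y := by
  rw [conn1_nablaP]
  exact curv_smul_oneForm a b c _ (e 4) i j x y

end Heisenberg

open Heisenberg in
theorem torsion_connection_curvature_general (a b c : ℝ) :
    (∀ x y : V, curv a b c (conn1 (nablaP a b c)) 0 1 x y = -a * dEta a b c x y)
    ∧ (∀ x y : V, curv a b c (conn1 (nablaP a b c)) 2 3 x y = a * dEta a b c x y)
    ∧ (∀ x y : V, curv a b c (conn1 (nablaP a b c)) 0 2 x y = -b * dEta a b c x y)
    ∧ (∀ x y : V, curv a b c (conn1 (nablaP a b c)) 1 3 x y = -b * dEta a b c x y)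
    ∧ (∀ x y : V, curv a b c (conn1 (nablaP a b c)) 0 3 x y = -c * dEta a b c x y)
    ∧ (∀ x y : V, curv a b c (conn1 (nablaP a b c)) 1 2 x y = c * dEta a b c x y)
    ∧ (∀ i j : Fin 5, ∀ x y : V,
        curv a b c (conn1 (nablaP a b c)) j i x y
          = -curv a b c (conn1 (nablaP a b c)) i j x y)
    ∧ (∀ i : Fin 5, ∀ x y : V, curv a b c (conn1 (nablaP a b c)) i 4 x y = 0) := by
  refine ⟨?_, ?_, ?_, ?_, ?_, ?_,
    fun i j x y => by rw [curv_nablaP, curv_nablaP, S_swap, neg_mul],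
    fun i x y => by rw [curv_nablaP, S_apply_four, zero_mul]⟩ <;>
  intro x y <;> simp [curv_nablaP, S]

/-- the curvature 2-forms of the torsion connection ∇⁺ on 𝔥(2,1)_{a,b,c}
are Ω¹₂ = −Ω³₄ = −a·de⁵, Ω¹₃ = Ω²₄ = −b·de⁵, Ω¹₄ = −Ω²₃ = −c·de⁵ (with Ωⱼᵢ = −Ωⁱⱼ),
and all the curvature forms Ωⁱ₅ vanish. -/
theorem torsion_connection_curvature (a b c : ℝ) (h : a ^ 2 + b ^ 2 + c ^ 2 ≠ 0) :
    (∀ x y : V, curv a b c (conn1 (nablaP a b c)) 0 1 x y = -a * dEta a b c x y)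
    ∧ (∀ x y : V, curv a b c (conn1 (nablaP a b c)) 2 3 x y = a * dEta a b c x y)
    ∧ (∀ x y : V, curv a b c (conn1 (nablaP a b c)) 0 2 x y = -b * dEta a b c x y)
    ∧ (∀ x y : V, curv a b c (conn1 (nablaP a b c)) 1 3 x y = -b * dEta a b c x y)
    ∧ (∀ x y : V, curv a b c (conn1 (nablaP a b c)) 0 3 x y = -c * dEta a b c x y)
    ∧ (∀ x y : V, curv a b c (conn1 (nablaP a b c)) 1 2 x y = c * dEta a b c x y)
    ∧ (∀ i j : Fin 5, ∀ x y : V,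
        curv a b c (conn1 (nablaP a b c)) j i x y
          = -curv a b c (conn1 (nablaP a b c)) i j x y)
    ∧ (∀ i : Fin 5, ∀ x y : V, curv a b c (conn1 (nablaP a b c)) i 4 x y = 0) :=
  torsion_connection_curvature_general a b c
end
end

section
/- Let (a,b,c) ∈ ℝ³ with a²+b²+c² ≠ 0 and set r = a²+b²+c². On 𝔥(2,1)_{a,b,c} with the orthonormal metric, the curvature 2-forms of the Levi-Civita connection are: Ωⁱ₅ = (r/4) eⁱ∧e⁵ for i = 1,…,4, and Ω¹₂ = −(3a/4)·de⁵ − (r/4)e³∧e⁴, Ω¹₃ = −(3b/4)·de⁵ + (r/4)e²∧e⁴, Ω¹₄ = −(3c/4)·de⁵ − (r/4)e²∧e³, Ω²₃ = (3c/4)·de⁵ − (r/4)e¹∧e⁴, Ω²₄ = −(3b/4)·de⁵ + (r/4)e¹∧e³, Ω³₄ = (3a/4)·de⁵ − (r/4)e¹∧e², with Ωⱼᵢ = −Ωⁱⱼ. -/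
noncomputable section
open Real

/-! The bracket of 𝔥(2,1)_{a,b,c} is `[x, y] = B(x, y) E₅` for a skew form `B` on `span(E₁,…,E₄)`
whose matrix squares to `-(a² + b² + c²)`. The Koszul formula then gives connection 1-forms
`ωⁱⱼ = ½ B(Eᵢ, Eⱼ) e⁵` on the horizontal block and `ωⁱ₅ = ½ B(Eᵢ, ·)`, so that
`Ωⁱⱼ = ½ B(Eᵢ, Eⱼ) de⁵ - ¼ B(Eᵢ, ·) ∧ B(Eⱼ, ·)` for `i, j ≤ 4`, while `B² = -r` turns
`Ωⁱ₅ = ¼ Σₖ B(Eᵢ, Eₖ) e⁵ ∧ B(Eₖ, ·)` into `(r/4) eⁱ ∧ e⁵`. -/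

def bracketCoeff (a b c : ℝ) (x y : V) : ℝ :=
  -a * (x 0 * y 1 - x 1 * y 0) + a * (x 2 * y 3 - x 3 * y 2)
    - b * (x 0 * y 2 - x 2 * y 0) - b * (x 1 * y 3 - x 3 * y 1)
    - c * (x 0 * y 3 - x 3 * y 0) + c * (x 1 * y 2 - x 2 * y 1)

section
variable {a b c : ℝ}

lemma curv_comm (σ : Fin 5 → Fin 5 → V → ℝ) (hσ : ∀ i j x, σ i j x = -σ j i x)
    (i j : Fin 5) (x y : V) : curv a b c σ j i x y = -curv a b c σ i j x y := by
  have hsum : ∑ k, (σ j k x * σ k i y - σ j k y * σ k i x)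
      = -∑ k, (σ i k x * σ k j y - σ i k y * σ k j x) := by
    rw [← Finset.sum_neg_distrib]
    refine Finset.sum_congr rfl fun k _ => ?_
    rw [hσ j k x, hσ j k y, hσ k i x, hσ k i y]
    ring
  simp only [curv, d1]
  rw [hsum, hσ j i]
  ring

lemma br_apply (x y : V) (k : Fin 5) :
    br a b c x y k = if k = 4 then bracketCoeff a b c x y else 0 := rfl

lemma dEta_apply (x y : V) : dEta a b c x y = -bracketCoeff a b c x y := rfl

lemma bracketCoeff_comm (x y : V) : bracketCoeff a b c x y = -bracketCoeff a b c y x := by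
  simp only [bracketCoeff]; ring

lemma bracketCoeff_E_four (y : V) : bracketCoeff a b c (E 4) y = 0 := by
  simp [bracketCoeff, E]

lemma bracketCoeff_E_four_right (x : V) : bracketCoeff a b c x (E 4) = 0 := by
  rw [bracketCoeff_comm, bracketCoeff_E_four, neg_zero]

lemma bracketCoeff_br_right (u x y : V) : bracketCoeff a b c u (br a b c x y) = 0 := by
  simp [bracketCoeff, br_apply]

lemma ip_E (v : V) (k : Fin 5) : ip v (E k) = v k := by
  simp [ip, E, Pi.single_apply]

lemma ip_br (u v w : V) : ip (br a b c u v) w = bracketCoeff a b c u v * w 4 := by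
  simp [ip, br_apply]

lemma conn1_nablaG (i j : Fin 5) (x : V) :
    conn1 (nablaG a b c) i j x =
      (1 / 2) * (bracketCoeff a b c (E i) (E j) * x 4
        + (if j = 4 then bracketCoeff a b c (E i) x else 0)
        - (if i = 4 then bracketCoeff a b c (E j) x else 0)) := by
  simp only [conn1, nablaG, ip_E, ip_br, br_apply]
  rw [bracketCoeff_comm x, bracketCoeff_comm (E j) (E i)]
  split_ifs <;> ring

lemma conn1_nablaG_comm (i j : Fin 5) (x : V) :
    conn1 (nablaG a b c) i j x = -conn1 (nablaG a b c) j i x := by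
  rw [conn1_nablaG, conn1_nablaG, bracketCoeff_comm (E j) (E i)]
  split_ifs <;> ring

lemma sum_bracketCoeff_mul_bracketCoeff {i : Fin 5} (hi : i ≠ 4) (y : V) :
    ∑ k, bracketCoeff a b c (E i) (E k) * bracketCoeff a b c (E k) y
      = -(a ^ 2 + b ^ 2 + c ^ 2) * y i := by
  fin_cases i
  all_goals first
    | exact absurd rfl hi
    | simp only [bracketCoeff, E, Fin.sum_univ_five, Pi.single_eq_same, Pi.single_eq_of_ne, ne_eq,
        Fin.reduceEq, not_false_eq_true, Fin.zero_eta, Fin.mk_one, Fin.reduceFinMk, Fin.isValue]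
      ring

lemma curv_nablaG_of_ne_four {i j : Fin 5} (hi : i ≠ 4) (hj : j ≠ 4) (x y : V) :
    curv a b c (conn1 (nablaG a b c)) i j x y
      = (1 / 2) * bracketCoeff a b c (E i) (E j) * dEta a b c x y
        - (1 / 4) * w11 (bracketCoeff a b c (E i)) (bracketCoeff a b c (E j)) x y := by
  simp only [curv, d1, conn1_nablaG, Fin.sum_univ_five, hi, hj, if_false, if_true,
    Fin.reduceEq, br_apply, bracketCoeff_E_four, bracketCoeff_E_four_right, dEta_apply, w11]
  ring

lemma curv_nablaG_four {i : Fin 5} (hi : i ≠ 4) (x y : V) :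
    curv a b c (conn1 (nablaG a b c)) i 4 x y
      = ((a ^ 2 + b ^ 2 + c ^ 2) / 4) * w11 (e i) (e 4) x y := by
  have hterm : ∀ k, conn1 (nablaG a b c) i k x * conn1 (nablaG a b c) k 4 y
      - conn1 (nablaG a b c) i k y * conn1 (nablaG a b c) k 4 x
      = (1 / 4) * (x 4 * (bracketCoeff a b c (E i) (E k) * bracketCoeff a b c (E k) y)
        - y 4 * (bracketCoeff a b c (E i) (E k) * bracketCoeff a b c (E k) x)) := by
    intro k
    by_cases hk : k = 4
    · subst hk
      simp only [conn1_nablaG, hi, if_true, if_false, bracketCoeff_E_four,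
        bracketCoeff_E_four_right]
      ring
    · simp only [conn1_nablaG, hi, hk, if_true, if_false, bracketCoeff_E_four_right]
      ring
  have hbr : conn1 (nablaG a b c) i 4 (br a b c x y) = 0 := by
    simp only [conn1_nablaG, hi, if_true, if_false, bracketCoeff_E_four_right,
      bracketCoeff_br_right]
    ring
  simp only [curv, d1, hbr, hterm, neg_zero, zero_add]
  rw [← Finset.mul_sum, Finset.sum_sub_distrib, ← Finset.mul_sum, ← Finset.mul_sum,
    sum_bracketCoeff_mul_bracketCoeff hi, sum_bracketCoeff_mul_bracketCoeff hi]
  simp only [w11, e]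
  ring

end

theorem levi_civita_curvature_general (a b c : ℝ) :
    let r := a ^ 2 + b ^ 2 + c ^ 2
    (∀ i : Fin 5, i ≠ 4 → ∀ x y : V,
      curv a b c (conn1 (nablaG a b c)) i 4 x y = (r / 4) * w11 (e i) (e 4) x y)
    ∧ (∀ x y : V, curv a b c (conn1 (nablaG a b c)) 0 1 x y =
        -(3 * a / 4) * dEta a b c x y - (r / 4) * w11 (e 2) (e 3) x y)
    ∧ (∀ x y : V, curv a b c (conn1 (nablaG a b c)) 0 2 x y =
        -(3 * b / 4) * dEta a b c x y + (r / 4) * w11 (e 1) (e 3) x y)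
    ∧ (∀ x y : V, curv a b c (conn1 (nablaG a b c)) 0 3 x y =
        -(3 * c / 4) * dEta a b c x y - (r / 4) * w11 (e 1) (e 2) x y)
    ∧ (∀ x y : V, curv a b c (conn1 (nablaG a b c)) 1 2 x y =
        (3 * c / 4) * dEta a b c x y - (r / 4) * w11 (e 0) (e 3) x y)
    ∧ (∀ x y : V, curv a b c (conn1 (nablaG a b c)) 1 3 x y =
        -(3 * b / 4) * dEta a b c x y + (r / 4) * w11 (e 0) (e 2) x y)
    ∧ (∀ x y : V, curv a b c (conn1 (nablaG a b c)) 2 3 x y =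
        (3 * a / 4) * dEta a b c x y - (r / 4) * w11 (e 0) (e 1) x y)
    ∧ (∀ i j : Fin 5, ∀ x y : V,
        curv a b c (conn1 (nablaG a b c)) j i x y
          = -curv a b c (conn1 (nablaG a b c)) i j x y) := by
  refine ⟨fun i hi x y => curv_nablaG_four hi x y, ?_, ?_, ?_, ?_, ?_, ?_,
    fun i j x y => curv_comm _ conn1_nablaG_comm i j x y⟩
  all_goals
    intro x y
    rw [curv_nablaG_of_ne_four (by decide) (by decide)]
    simp only [w11, dEta_apply, bracketCoeff, E, e, Pi.single_eq_same, Pi.single_eq_of_ne, ne_eq,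
      Fin.reduceEq, not_false_eq_true]
    ring

/-- with r = a²+b²+c², the curvature 2-forms of the Levi-Civita
connection of 𝔥(2,1)_{a,b,c} are Ωⁱ₅ = (r/4) eⁱ∧e⁵ for i = 1,…,4, and
Ω¹₂ = −(3a/4)·de⁵ − (r/4)e³∧e⁴, Ω¹₃ = −(3b/4)·de⁵ + (r/4)e²∧e⁴,
Ω¹₄ = −(3c/4)·de⁵ − (r/4)e²∧e³, Ω²₃ = (3c/4)·de⁵ − (r/4)e¹∧e⁴,
Ω²₄ = −(3b/4)·de⁵ + (r/4)e¹∧e³, Ω³₄ = (3a/4)·de⁵ − (r/4)e¹∧e², with Ωⱼᵢ = −Ωⁱⱼ. -/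
theorem levi_civita_curvature (a b c : ℝ) (h : a ^ 2 + b ^ 2 + c ^ 2 ≠ 0) :
    let r := a ^ 2 + b ^ 2 + c ^ 2
    (∀ i : Fin 5, i ≠ 4 → ∀ x y : V,
      curv a b c (conn1 (nablaG a b c)) i 4 x y = (r / 4) * w11 (e i) (e 4) x y)
    ∧ (∀ x y : V, curv a b c (conn1 (nablaG a b c)) 0 1 x y =
        -(3 * a / 4) * dEta a b c x y - (r / 4) * w11 (e 2) (e 3) x y)
    ∧ (∀ x y : V, curv a b c (conn1 (nablaG a b c)) 0 2 x y =
        -(3 * b / 4) * dEta a b c x y + (r / 4) * w11 (e 1) (e 3) x y)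
    ∧ (∀ x y : V, curv a b c (conn1 (nablaG a b c)) 0 3 x y =
        -(3 * c / 4) * dEta a b c x y - (r / 4) * w11 (e 1) (e 2) x y)
    ∧ (∀ x y : V, curv a b c (conn1 (nablaG a b c)) 1 2 x y =
        (3 * c / 4) * dEta a b c x y - (r / 4) * w11 (e 0) (e 3) x y)
    ∧ (∀ x y : V, curv a b c (conn1 (nablaG a b c)) 1 3 x y =
        -(3 * b / 4) * dEta a b c x y + (r / 4) * w11 (e 0) (e 2) x y)
    ∧ (∀ x y : V, curv a b c (conn1 (nablaG a b c)) 2 3 x y =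
        (3 * a / 4) * dEta a b c x y - (r / 4) * w11 (e 0) (e 1) x y)
    ∧ (∀ i j : Fin 5, ∀ x y : V,
        curv a b c (conn1 (nablaG a b c)) j i x y
          = -curv a b c (conn1 (nablaG a b c)) i j x y) :=
  levi_civita_curvature_general a b c
end
end

section
/- Let (a,b,c) ∈ ℝ³ with a²+b²+c² ≠ 0. On 𝔥(2,1)_{a,b,c}, the connection ∇⁻ defined by ⟨∇⁻_X Y, Z⟩ = ⟨∇_X Y, Z⟩ − ½T(X,Y,Z) has vanishing first Pontrjagin form: its curvature 2-forms satisfy Σ_{1≤i<j≤5} Ωⁱⱼ ∧ Ωⁱⱼ = 0. -/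
noncomputable section
open Real

/-- The connection ∇⁻: ⟨∇⁻_X Y, Z⟩ = ⟨∇_X Y, Z⟩ − ½T(X,Y,Z). -/
def nablaM (a b c : ℝ) (x y : V) : V := fun k =>
  nablaG a b c x y k - (1 / 2) * T3 a b c x y (E k)

/-! Every bracket is a multiple of the central vector E₅, so `[X,Y] = -dη(X,Y) E₅`, and the Koszul
formula collapses to `⟨∇⁻_X Y, Z⟩ = η(Y) dη(X,Z) - η(Z) dη(X,Y)`. Hence, writing `θᵢ = dη(·, Eᵢ)`,
the connection forms are `ωⁱⱼ = η(Eⱼ) θᵢ - η(Eᵢ) θⱼ`. These are closed because the algebra is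
2-step nilpotent and `θ₅ = 0`, and the quadratic term reduces to `θⱼ ∧ θᵢ`. So every curvature
form is decomposable, and the wedge square of a decomposable 2-form vanishes. -/

lemma w22_w11_self (α β : V → ℝ) (x y z w : V) : w22 (w11 α β) (w11 α β) x y z w = 0 := by
  simp only [w22, w11]
  ring

section

variable (a b c : ℝ)

lemma dEta_br_left (x y z : V) : dEta a b c (br a b c x y) z = 0 := by
  simp [dEta, d1, br, e]

lemma dEta_E_four_right (x : V) : dEta a b c x (E 4) = 0 := by
  simp [dEta, d1, br, e, E]

lemma ip_nablaM (x y z : V) :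
    ip (nablaM a b c x y) z = e 4 y * dEta a b c x z - e 4 z * dEta a b c x y := by
  simp [ip, nablaM, nablaG, T3, w12, dEta, d1, br, e, E, Fin.sum_univ_five, Pi.single_apply]
  ring

lemma conn1_nablaM (i j : Fin 5) :
    conn1 (nablaM a b c) i j =
      fun x => e 4 (E j) * dEta a b c x (E i) - e 4 (E i) * dEta a b c x (E j) :=
  funext fun x => ip_nablaM a b c x (E j) (E i)

lemma curv_conn1_nablaM (i j : Fin 5) :
    curv a b c (conn1 (nablaM a b c)) i j =
      w11 (dEta a b c · (E j)) (dEta a b c · (E i)) := by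
  funext x y
  simp only [curv, conn1_nablaM, d1, dEta_br_left, dEta_E_four_right, w11, Fin.sum_univ_five]
  simp [e, E]
  ring

end

theorem minus_connection_pontrjagin_vanishes_general (a b c : ℝ) :
    ∀ x y z w : V,
      (∑ i, ∑ j, if i < j then
          w22 (curv a b c (conn1 (nablaM a b c)) i j)
            (curv a b c (conn1 (nablaM a b c)) i j) x y z w
        else 0) = 0 := by
  intro x y z w
  simp only [curv_conn1_nablaM, w22_w11_self, ite_self, Finset.sum_const_zero]

/-- on 𝔥(2,1)_{a,b,c}, the connection ∇⁻ has vanishing first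
Pontrjagin form: Σ_{1≤i<j≤5} Ωⁱⱼ∧Ωⁱⱼ = 0. -/
theorem minus_connection_pontrjagin_vanishes (a b c : ℝ)
    (h : a ^ 2 + b ^ 2 + c ^ 2 ≠ 0) :
    ∀ x y z w : V,
      (∑ i, ∑ j, if i < j then
          w22 (curv a b c (conn1 (nablaM a b c)) i j)
            (curv a b c (conn1 (nablaM a b c)) i j) x y z w
        else 0) = 0 :=
  minus_connection_pontrjagin_vanishes_general a b c
end
end

section
/- Let E₁,…,E₅ be the standard orthonormal basis of ℝ⁵, ψ the endomorphism with ψE₁ = −E₂, ψE₂ = E₁, ψE₃ = −E₄, ψE₄ = E₃, ψE₅ = 0 (components ψ^s_n), and F the 2-form e¹∧e² + e³∧e⁴ (components F_{tr}). Let R : Fin 5 → Fin 5 → Fin 5 → Fin 5 → ℝ be a tensor, R_{mnij}, that is antisymmetric in (m,n) and in (i,j) and is an SU(2)-instanton in its first pair of indices, i.e. Σ_{s,t} ψ^s_k ψ^t_l R_{stij} = R_{klij} for all k,l,i,j and Σ_{k,l} R_{klij} F_{kl} = 0 for all i,j. Then for all m,n: (1/2) Σ_{s,t,r,i,j} [ R_{msij}R_{trij}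 + R_{mtij}R_{rsij} + R_{mrij}R_{stij} ] F_{tr} ψ^s_n = Σ_{s,t,r} R_{mstr} R_{nstr}. -/
noncomputable section

/-- The matrix entries ψ^s_n of the endomorphism ψ of ℝ⁵ with ψE₁ = −E₂, ψE₂ = E₁,
ψE₃ = −E₄, ψE₄ = E₃, ψE₅ = 0 (so ψE_n = Σ_s ψ^s_n E_s, 0-indexed). -/
def psiM : Fin 5 → Fin 5 → ℝ :=
  ![![0, 1, 0, 0, 0],
    ![-1, 0, 0, 0, 0],
    ![0, 0, 0, 1, 0],
    ![0, 0, -1, 0, 0],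
    ![0, 0, 0, 0, 0]]

/-- The components F_{tr} of the 2-form F = e¹∧e² + e³∧e⁴ on ℝ⁵ (0-indexed):
F_{12} = F_{34} = 1 = −F_{21} = −F_{43}, all other components zero. -/
def Fc : Fin 5 → Fin 5 → ℝ :=
  ![![0, 1, 0, 0, 0],
    ![-1, 0, 0, 0, 0],
    ![0, 0, 0, 1, 0],
    ![0, 0, -1, 0, 0],
    ![0, 0, 0, 0, 0]]

/-!
For fixed `i, j` the matrix `A = R(·, ·, i, j)` is skew, satisfies `ψᵀ A ψ = A`, and is orthogonal
to `F`. As `F = -ψᵀ`, the contraction `Σ_{r,s} A_{rs} F_{tr} ψ^s_n` equals `-(ψᵀ A ψ)_{tn} = -A_{tn}`,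
so the middle term of the cyclic sum is `Σ_t A_{mt} A_{nt}`; the first term vanishes by `⟨A, F⟩ = 0`,
and the last one equals the middle one after swapping `t` and `r`. Summing over `i, j` gives the claim.
-/

lemma Fc_eq_neg_psiM (a b : Fin 5) : Fc a b = -psiM b a := by
  fin_cases a <;> fin_cases b <;> norm_num [Fc, psiM]

lemma Fc_antisymm (a b : Fin 5) : Fc a b = -Fc b a := by
  fin_cases a <;> fin_cases b <;> norm_num [Fc]

lemma Fintype.sum_comm_three_two {α β γ δ ε M : Type*} [Fintype α] [Fintype β] [Fintype γ]
    [Fintype δ] [Fintype ε] [AddCommMonoid M] (f : α → β → γ → δ → ε → M) :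
    ∑ a, ∑ b, ∑ c, ∑ d, ∑ e, f a b c d e = ∑ d, ∑ e, ∑ a, ∑ b, ∑ c, f a b c d e := by
  -- the type arguments pin each swap down, so `simp_rw` cannot loop
  simp_rw [Finset.sum_comm (γ := γ) (α := δ), Finset.sum_comm (γ := γ) (α := ε),
    Finset.sum_comm (γ := β) (α := δ), Finset.sum_comm (γ := β) (α := ε),
    Finset.sum_comm (γ := α) (α := δ), Finset.sum_comm (γ := α) (α := ε)]

section InstantonContraction

variable {ι 𝕜 : Type*} [Fintype ι] [CommRing 𝕜] (A F ψ : ι → ι → 𝕜)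

lemma sum_sum_mul_mul_eq_neg_of_invariant (hA : ∀ k l, ∑ s, ∑ t, ψ s k * ψ t l * A s t = A k l)
    (hFψ : ∀ a b, F a b = -ψ b a) (t n : ι) :
    ∑ r, ∑ s, A r s * F t r * ψ s n = -A t n := by
  rw [← hA t n, ← Finset.sum_neg_distrib]
  refine Finset.sum_congr rfl fun r _ => ?_
  rw [← Finset.sum_neg_distrib]
  refine Finset.sum_congr rfl fun s _ => ?_
  rw [hFψ]; ring

lemma sum_orthogonal_term_eq_zero (hAF : ∑ k, ∑ l, A k l * F k l = 0) (m n : ι) :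
    ∑ s, ∑ t, ∑ r, A m s * A t r * F t r * ψ s n = 0 := by
  refine Finset.sum_eq_zero fun s _ => ?_
  calc ∑ t, ∑ r, A m s * A t r * F t r * ψ s n
      = A m s * ψ s n * ∑ t, ∑ r, A t r * F t r := by
        simp only [Finset.mul_sum]
        exact Finset.sum_congr rfl fun t _ => Finset.sum_congr rfl fun r _ => by ring
    _ = 0 := by rw [hAF, mul_zero]

lemma sum_cyclic_terms_eq (hA : ∀ a b, A a b = -A b a) (hF : ∀ a b, F a b = -F b a) (m n : ι) :
    ∑ s, ∑ t, ∑ r, A m r * A s t * F t r * ψ s n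
      = ∑ s, ∑ t, ∑ r, A m t * A r s * F t r * ψ s n := by
  refine Finset.sum_congr rfl fun s _ => ?_
  rw [Finset.sum_comm]
  refine Finset.sum_congr rfl fun t _ => Finset.sum_congr rfl fun r _ => ?_
  rw [hA s r, hF r t]; ring

lemma sum_invariant_term_eq (hA : ∀ a b, A a b = -A b a)
    (hAψ : ∀ k l, ∑ s, ∑ t, ψ s k * ψ t l * A s t = A k l)
    (hFψ : ∀ a b, F a b = -ψ b a) (m n : ι) :
    ∑ s, ∑ t, ∑ r, A m t * A r s * F t r * ψ s n = ∑ t, A m t * A n t := by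
  rw [← Finset.sum_comm_cycle]
  refine Finset.sum_congr rfl fun t _ => ?_
  calc ∑ r, ∑ s, A m t * A r s * F t r * ψ s n
      = A m t * ∑ r, ∑ s, A r s * F t r * ψ s n := by
        simp only [Finset.mul_sum]
        exact Finset.sum_congr rfl fun r _ => Finset.sum_congr rfl fun s _ => by ring
    _ = A m t * A n t := by rw [sum_sum_mul_mul_eq_neg_of_invariant A F ψ hAψ hFψ, hA n t]

lemma sum_cyclic_sum_mul_eq_two_mul (hA : ∀ a b, A a b = -A b a)
    (hAψ : ∀ k l, ∑ s, ∑ t, ψ s k * ψ t l * A s t = A k l)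
    (hAF : ∑ k, ∑ l, A k l * F k l = 0)
    (hF : ∀ a b, F a b = -F b a) (hFψ : ∀ a b, F a b = -ψ b a) (m n : ι) :
    ∑ s, ∑ t, ∑ r, (A m s * A t r + A m t * A r s + A m r * A s t) * F t r * ψ s n
      = 2 * ∑ t, A m t * A n t := by
  simp only [add_mul, Finset.sum_add_distrib]
  rw [sum_orthogonal_term_eq_zero A F ψ hAF, sum_cyclic_terms_eq A F ψ hA hF,
    sum_invariant_term_eq A F ψ hA hAψ hFψ]
  ring

end InstantonContraction

theorem quadratic_identity_for_instantons_general (R : Fin 5 → Fin 5 → Fin 5 → Fin 5 → ℝ)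
    (hskew₁ : ∀ m n i j, R m n i j = -R n m i j)
    (hinst₁ : ∀ k l i j, (∑ s, ∑ t, psiM s k * psiM t l * R s t i j) = R k l i j)
    (hinst₂ : ∀ i j, (∑ k, ∑ l, R k l i j * Fc k l) = 0) :
    ∀ m n : Fin 5,
      (1 / 2) * (∑ s, ∑ t, ∑ r, ∑ i, ∑ j,
          (R m s i j * R t r i j + R m t i j * R r s i j + R m r i j * R s t i j)
            * Fc t r * psiM s n)
        = ∑ s, ∑ t, ∑ r, R m s t r * R n s t r := by
  intro m n
  rw [Fintype.sum_comm_three_two, Finset.mul_sum]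
  conv_rhs => rw [← Finset.sum_comm_cycle]
  refine Finset.sum_congr rfl fun i _ => ?_
  rw [Finset.mul_sum]
  refine Finset.sum_congr rfl fun j _ => ?_
  rw [sum_cyclic_sum_mul_eq_two_mul (R · · i j) Fc psiM (fun a b => hskew₁ a b i j)
    (fun k l => hinst₁ k l i j) (hinst₂ i j) Fc_antisymm Fc_eq_neg_psiM]
  ring

/-- if R_{mnij} is antisymmetric in (m,n) and in (i,j) and is an
SU(2)-instanton in its first pair of indices, then the quadratic curvature identity
(1/2)Σ[R_{msij}R_{trij} + R_{mtij}R_{rsij} + R_{mrij}R_{stij}]F_{tr}ψ^s_n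
= R_{mstr}R_{nstr} holds for all m,n. -/
theorem quadratic_identity_for_instantons (R : Fin 5 → Fin 5 → Fin 5 → Fin 5 → ℝ)
    (hskew₁ : ∀ m n i j, R m n i j = -R n m i j)
    (hskew₂ : ∀ m n i j, R m n i j = -R m n j i)
    (hinst₁ : ∀ k l i j, (∑ s, ∑ t, psiM s k * psiM t l * R s t i j) = R k l i j)
    (hinst₂ : ∀ i j, (∑ k, ∑ l, R k l i j * Fc k l) = 0) :
    ∀ m n : Fin 5,
      (1 / 2) * (∑ s, ∑ t, ∑ r, ∑ i, ∑ j,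
          (R m s i j * R t r i j + R m t i j * R r s i j + R m r i j * R s t i j)
            * Fc t r * psiM s n)
        = ∑ s, ∑ t, ∑ r, R m s t r * R n s t r :=
  quadratic_identity_for_instantons_general R hskew₁ hinst₁ hinst₂
end
end

section
/- Let (a,b,c) ∈ ℝ³ with r = a²+b²+c² ≠ 0. On 𝔥(2,1)_{a,b,c} with the orthonormal metric, define the curvature R(X,Y)Z = ∇_X∇_Y Z − ∇_Y∇_X Z − ∇_{[X,Y]}Z of the Levi-Civita connection ∇ and the Ricci tensor Ric(X,Y) = Σ_{i=1}^{5} ⟨R(E_i,X)Y, E_i⟩, and analogously Ric⁺ for the torsion connection ∇⁺. Then Ric(E_m,E_n) = −(1/2) Σ_i dη(E_i,E_m)dη(E_i,E_n) + (1/4)|dη|² η(E_m)η(E_n) and Ric⁺(E_m,E_n) = −Σ_i dη(E_i,E_m)dη(E_i,E_n), where |dη|² = Σ_{i,j} dη(E_i,E_j)². Explicitly, Ric is diagonal with Ric(E_i,E_i) = −r/2 for i = 1,…,4 and Ric(E₅,E₅) = r, and Ric⁺ is diagonal with Ric⁺(E_i,E_i) = −r for i = 1,…,4 and Ric⁺(E₅,E₅)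 = 0. -/
/-!
The bracket of 𝔥(2,1)_{a,b,c} is `[X, Y] = ⟨X, J Y⟩ E₅` for a skew matrix `J` (`bracketMatrix`)
with `J E₅ = 0` and `J² = -r` on `E₅^⊥`: `J = aJ₁ + bJ₂ + cJ₃` for the anticommuting complex
structures `J₁, J₂, J₃` of a quaternionic structure on `span E₁…E₄`. Hence `dη(X, Y) = -⟨X, J Y⟩`
and `Σᵢ dη(Eᵢ, X) dη(Eᵢ, Y) = ⟨J X, J Y⟩`. The torsion connection is `∇⁺_X Y = η(X) J Y`, whose
curvature is `R⁺(U, X) Y = -⟨U, J X⟩ J Y`, so `Ric⁺(X, Y) = -⟨J X, J Y⟩`. The Levi-Civita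
connection is `∇_X Y = ½ (η(X) J Y + η(Y) J X + ⟨X, J Y⟩ E₅)`; in the trace of its curvature
only `tr J² = -4r` and `⟨J X, J Y⟩` survive, giving `Ric(X, Y) = -½ ⟨J X, J Y⟩ + r η(X) η(Y)`.
-/

noncomputable section
open Real

/-- Curvature R(X,Y)Z = ∇_X∇_Y Z − ∇_Y∇_X Z − ∇_{[X,Y]}Z of a connection D. -/
def curvOp (a b c : ℝ) (D : V → V → V) (x y z : V) : V :=
  D x (D y z) - D y (D x z) - D (br a b c x y) z

/-- Ricci tensor Ric(X,Y) = Σ_i ⟨R(E_i,X)Y, E_i⟩ of a connection D. -/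
def ricci (a b c : ℝ) (D : V → V → V) (x y : V) : ℝ :=
  ∑ i, ip (curvOp a b c D (E i) x y) (E i)

/-- |dη|² = Σ_{i,j} dη(E_i,E_j)². -/
def dEtaNormSq (a b c : ℝ) : ℝ := ∑ i, ∑ j, (dEta a b c (E i) (E j)) ^ 2

open Matrix

section

variable (a b c : ℝ)

theorem ip_eq_dotProduct : ip = dotProduct := rfl

theorem E_apply (i k : Fin 5) : E i k = if k = i then 1 else 0 := Pi.single_apply i 1 k

theorem E_four_apply_four : E 4 4 = 1 := Pi.single_eq_same 4 1

theorem E_dotProduct (i : Fin 5) (v : V) : E i ⬝ᵥ v = v i := by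
  simp [E, single_dotProduct]

-- The instanton coefficient matrix `S`, with parameters `(a, b, c)`, is also the structure
-- matrix of the bracket: `[X, Y] = ⟨X, S Y⟩ E₅`.
def bracketMatrix : Matrix (Fin 5) (Fin 5) ℝ := Matrix.of (S a b c)

theorem br_eq (x y : V) : br a b c x y = (x ⬝ᵥ bracketMatrix a b c *ᵥ y) • E 4 := by
  funext k
  fin_cases k <;> simp [br, E, dotProduct, mulVec, bracketMatrix, S, Fin.sum_univ_five]
  ring

theorem bracketMatrix_mulVec_apply_four (v : V) : (bracketMatrix a b c *ᵥ v) 4 = 0 := by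
  simp [mulVec, bracketMatrix, S]

theorem bracketMatrix_mulVec_E_four : bracketMatrix a b c *ᵥ E 4 = 0 := by
  funext k
  fin_cases k <;> simp [E, mulVec, bracketMatrix, S]

theorem bracketMatrix_transpose : (bracketMatrix a b c)ᵀ = -bracketMatrix a b c := by
  ext i j
  fin_cases i <;> fin_cases j <;> simp [bracketMatrix, S]

theorem bracketMatrix_mulVec_bracketMatrix_mulVec (v : V) :
    bracketMatrix a b c *ᵥ bracketMatrix a b c *ᵥ v
      = -(a ^ 2 + b ^ 2 + c ^ 2) • (v - v 4 • E 4) := by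
  funext k
  fin_cases k <;> simp [E, mulVec, dotProduct, bracketMatrix, S, Fin.sum_univ_five] <;> ring

theorem dotProduct_bracketMatrix_mulVec (x y : V) :
    x ⬝ᵥ bracketMatrix a b c *ᵥ y = -(bracketMatrix a b c *ᵥ x ⬝ᵥ y) := by
  rw [dotProduct_mulVec, ← mulVec_transpose, bracketMatrix_transpose, neg_mulVec, neg_dotProduct]

theorem bracketMatrix_mulVec_dotProduct_bracketMatrix_mulVec (x y : V) :
    bracketMatrix a b c *ᵥ x ⬝ᵥ bracketMatrix a b c *ᵥ y =
      (a ^ 2 + b ^ 2 + c ^ 2) * (x ⬝ᵥ y - x 4 * y 4) := by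
  rw [← neg_neg (_ ⬝ᵥ _), ← dotProduct_bracketMatrix_mulVec,
    bracketMatrix_mulVec_bracketMatrix_mulVec, dotProduct_smul, dotProduct_sub, dotProduct_smul,
    dotProduct_comm x (E 4), E_dotProduct, smul_eq_mul, smul_eq_mul]
  ring

theorem trace_bracketMatrix : ∑ i, (bracketMatrix a b c *ᵥ E i) i = 0 := by
  simp [Fin.sum_univ_five, E, bracketMatrix, S]

theorem trace_bracketMatrix_sq :
    ∑ i, (bracketMatrix a b c *ᵥ bracketMatrix a b c *ᵥ E i) i
      = -4 * (a ^ 2 + b ^ 2 + c ^ 2) := by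
  simp only [bracketMatrix_mulVec_bracketMatrix_mulVec, Fin.sum_univ_five, Pi.smul_apply,
    Pi.sub_apply, smul_eq_mul, E_apply, Fin.reduceEq, ↓reduceIte, mul_zero, sub_zero, mul_one,
    sub_self]
  ring

theorem dEta_eq (x y : V) : dEta a b c x y = -(x ⬝ᵥ bracketMatrix a b c *ᵥ y) := by
  simp [dEta, d1, e, br_eq, E]

theorem sum_dEta_mul_dEta (x y : V) :
    ∑ i, dEta a b c (E i) x * dEta a b c (E i) y =
      bracketMatrix a b c *ᵥ x ⬝ᵥ bracketMatrix a b c *ᵥ y := by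
  simp only [dEta_eq, E_dotProduct, neg_mul_neg]
  rfl

theorem dEtaNormSq_eq : dEtaNormSq a b c = 4 * (a ^ 2 + b ^ 2 + c ^ 2) := by
  rw [dEtaNormSq, Finset.sum_comm]
  simp only [sq, sum_dEta_mul_dEta, bracketMatrix_mulVec_dotProduct_bracketMatrix_mulVec,
    E_dotProduct, E_apply]
  simp only [Fin.sum_univ_five, Fin.reduceEq, ↓reduceIte, mul_one, mul_zero, sub_zero, sub_self]
  ring

theorem nablaG_eq (x y : V) : nablaG a b c x y =
    (1 / 2 : ℝ) • (x 4 • bracketMatrix a b c *ᵥ y + y 4 • bracketMatrix a b c *ᵥ x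
      + (x ⬝ᵥ bracketMatrix a b c *ᵥ y) • E 4) := by
  funext k
  simp only [nablaG, br_eq, ip_eq_dotProduct, smul_dotProduct, E_dotProduct,
    dotProduct_comm _ (E k)]
  rw [dotProduct_bracketMatrix_mulVec a b c y]
  simp only [Pi.add_apply, Pi.smul_apply, smul_eq_mul, dotProduct_comm _ (E k), E_dotProduct,
    E_apply]
  ring

theorem nablaP_eq (x y : V) : nablaP a b c x y = x 4 • bracketMatrix a b c *ᵥ y := by
  funext k
  simp only [nablaP, nablaG_eq, T3, w12, dEta_eq, e]
  rw [dotProduct_bracketMatrix_mulVec a b c y, dotProduct_bracketMatrix_mulVec a b c x (E k)]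
  simp only [Pi.add_apply, Pi.smul_apply, smul_eq_mul, dotProduct_comm _ (E k), E_dotProduct,
    E_apply, eq_comm (a := (4 : Fin 5))]
  ring

theorem curvOp_nablaP (u x y : V) :
    curvOp a b c (nablaP a b c) u x y =
      -(u ⬝ᵥ bracketMatrix a b c *ᵥ x) • bracketMatrix a b c *ᵥ y := by
  simp only [curvOp, nablaP_eq, br_eq, mulVec_smul, Pi.smul_apply, smul_eq_mul, E_four_apply_four]
  module

theorem curvOp_nablaG (u x y : V) :
    curvOp a b c (nablaG a b c) u x y =
      (1 / 4 : ℝ) • ((u 4 * y 4) • bracketMatrix a b c *ᵥ bracketMatrix a b c *ᵥ x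
        - (x 4 * y 4) • bracketMatrix a b c *ᵥ bracketMatrix a b c *ᵥ u
        + (x ⬝ᵥ bracketMatrix a b c *ᵥ y) • bracketMatrix a b c *ᵥ u
        - (u ⬝ᵥ bracketMatrix a b c *ᵥ y) • bracketMatrix a b c *ᵥ x
        + (x 4 * (u ⬝ᵥ bracketMatrix a b c *ᵥ bracketMatrix a b c *ᵥ y)
          + y 4 * (u ⬝ᵥ bracketMatrix a b c *ᵥ bracketMatrix a b c *ᵥ x)
          - u 4 * (x ⬝ᵥ bracketMatrix a b c *ᵥ bracketMatrix a b c *ᵥ y)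
          - y 4 * (x ⬝ᵥ bracketMatrix a b c *ᵥ bracketMatrix a b c *ᵥ u)) • E 4)
      - (1 / 2 : ℝ) • (u ⬝ᵥ bracketMatrix a b c *ᵥ x) • bracketMatrix a b c *ᵥ y := by
  simp only [curvOp, nablaG_eq, br_eq, mulVec_smul, mulVec_add, dotProduct_add, dotProduct_smul,
    smul_dotProduct, Pi.smul_apply, Pi.add_apply, smul_eq_mul, bracketMatrix_mulVec_apply_four,
    bracketMatrix_mulVec_E_four, E_four_apply_four, dotProduct_zero, E_dotProduct]
  module

theorem ricci_eq_sum (D : V → V → V) (x y : V) :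
    ricci a b c D x y = ∑ i, curvOp a b c D (E i) x y i := by
  simp only [ricci, ip_eq_dotProduct, dotProduct_comm _ (E _), E_dotProduct]

theorem ricci_nablaP (x y : V) :
    ricci a b c (nablaP a b c) x y
      = -(bracketMatrix a b c *ᵥ x ⬝ᵥ bracketMatrix a b c *ᵥ y) := by
  simp only [ricci_eq_sum, curvOp_nablaP, E_dotProduct, Pi.smul_apply, smul_eq_mul, neg_mul,
    Finset.sum_neg_distrib]
  rfl

theorem ricci_nablaG (x y : V) :
    ricci a b c (nablaG a b c) x y =
      -(1 / 2) * (bracketMatrix a b c *ᵥ x ⬝ᵥ bracketMatrix a b c *ᵥ y)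
        + (a ^ 2 + b ^ 2 + c ^ 2) * (x 4 * y 4) := by
  simp only [ricci_eq_sum, curvOp_nablaG, E_dotProduct, Pi.smul_apply, Pi.add_apply,
    Pi.sub_apply, smul_eq_mul, E_apply, ite_mul, mul_ite, one_mul, zero_mul, mul_one, mul_zero,
    Finset.sum_add_distrib, Finset.sum_sub_distrib, ← Finset.mul_sum, Finset.sum_ite_eq,
    Finset.sum_ite_eq', Finset.mem_univ, if_true, trace_bracketMatrix, trace_bracketMatrix_sq,
    bracketMatrix_mulVec_apply_four, bracketMatrix_mulVec_E_four, mulVec_zero, dotProduct_zero]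
  rw [dotProduct_bracketMatrix_mulVec a b c x]
  simp only [dotProduct, mul_comm ((bracketMatrix a b c *ᵥ y) _)]
  ring

theorem ricci_nablaG_E (m n : Fin 5) :
    ricci a b c (nablaG a b c) (E m) (E n) =
      if m = n then (if m = 4 then a ^ 2 + b ^ 2 + c ^ 2 else -(a ^ 2 + b ^ 2 + c ^ 2) / 2)
      else 0 := by
  rw [ricci_nablaG, bracketMatrix_mulVec_dotProduct_bracketMatrix_mulVec, E_dotProduct]
  fin_cases m <;> fin_cases n <;> simp [E_apply] <;> ring

theorem ricci_nablaP_E (m n : Fin 5) :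
    ricci a b c (nablaP a b c) (E m) (E n) =
      if m = n ∧ m ≠ 4 then -(a ^ 2 + b ^ 2 + c ^ 2) else 0 := by
  rw [ricci_nablaP, bracketMatrix_mulVec_dotProduct_bracketMatrix_mulVec, E_dotProduct]
  fin_cases m <;> fin_cases n <;> simp [E_apply]

end

theorem ricci_tensors_general (a b c : ℝ) :
    let r := a ^ 2 + b ^ 2 + c ^ 2
    (∀ m n : Fin 5,
      ricci a b c (nablaG a b c) (E m) (E n) =
        -(1 / 2) * (∑ i, dEta a b c (E i) (E m) * dEta a b c (E i) (E n))
          + (1 / 4) * dEtaNormSq a b c * e 4 (E m) * e 4 (E n))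
    ∧ (∀ m n : Fin 5,
        ricci a b c (nablaP a b c) (E m) (E n) =
          -(∑ i, dEta a b c (E i) (E m) * dEta a b c (E i) (E n)))
    ∧ (∀ i : Fin 5, i ≠ 4 → ricci a b c (nablaG a b c) (E i) (E i) = -r / 2)
    ∧ ricci a b c (nablaG a b c) (E 4) (E 4) = r
    ∧ (∀ i : Fin 5, i ≠ 4 → ricci a b c (nablaP a b c) (E i) (E i) = -r)
    ∧ ricci a b c (nablaP a b c) (E 4) (E 4) = 0
    ∧ (∀ m n : Fin 5, m ≠ n →
        ricci a b c (nablaG a b c) (E m) (E n) = 0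
          ∧ ricci a b c (nablaP a b c) (E m) (E n) = 0) := by
  refine ⟨fun m n => ?_, fun m n => ?_, fun i hi => ?_, ?_, fun i hi => ?_, ?_, fun m n hmn => ?_⟩
  · simp only [ricci_nablaG, sum_dEta_mul_dEta, dEtaNormSq_eq, e]
    ring
  · rw [ricci_nablaP, sum_dEta_mul_dEta]
  · simp [ricci_nablaG_E, hi]
  · simp [ricci_nablaG_E]
  · simp [ricci_nablaP_E, hi]
  · simp [ricci_nablaP_E]
  · simp [ricci_nablaG_E, ricci_nablaP_E, hmn]

/-- on 𝔥(2,1)_{a,b,c} with r = a²+b²+c² ≠ 0, the Ricci tensors of the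
Levi-Civita connection ∇ and the torsion connection ∇⁺ are
Ric(E_m,E_n) = −(1/2)Σ_i dη(E_i,E_m)dη(E_i,E_n) + (1/4)|dη|²η(E_m)η(E_n) and
Ric⁺(E_m,E_n) = −Σ_i dη(E_i,E_m)dη(E_i,E_n); explicitly, both are diagonal with
Ric(E_i,E_i) = −r/2 (i = 1,…,4), Ric(E₅,E₅) = r, Ric⁺(E_i,E_i) = −r (i = 1,…,4),
Ric⁺(E₅,E₅) = 0. -/
theorem ricci_tensors (a b c : ℝ) (h : a ^ 2 + b ^ 2 + c ^ 2 ≠ 0) :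
    let r := a ^ 2 + b ^ 2 + c ^ 2
    (∀ m n : Fin 5,
      ricci a b c (nablaG a b c) (E m) (E n) =
        -(1 / 2) * (∑ i, dEta a b c (E i) (E m) * dEta a b c (E i) (E n))
          + (1 / 4) * dEtaNormSq a b c * e 4 (E m) * e 4 (E n))
    ∧ (∀ m n : Fin 5,
        ricci a b c (nablaP a b c) (E m) (E n) =
          -(∑ i, dEta a b c (E i) (E m) * dEta a b c (E i) (E n)))
    ∧ (∀ i : Fin 5, i ≠ 4 → ricci a b c (nablaG a b c) (E i) (E i) = -r / 2)
    ∧ ricci a b c (nablaG a b c) (E 4) (E 4) = r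
    ∧ (∀ i : Fin 5, i ≠ 4 → ricci a b c (nablaP a b c) (E i) (E i) = -r)
    ∧ ricci a b c (nablaP a b c) (E 4) (E 4) = 0
    ∧ (∀ m n : Fin 5, m ≠ n →
        ricci a b c (nablaG a b c) (E m) (E n) = 0
          ∧ ricci a b c (nablaP a b c) (E m) (E n) = 0) :=
  ricci_tensors_general a b c
end
end
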